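/- arXiv:2210.16301 — 3 statements merged into one kernel-verified Lean document; each statement's English description precedes it below -/
import Mathlib

section
/- With the hypotheses of the previous statement (block matrices Π_A = [[Ω₁,И₁],[Ω₂,И₂]], Π_{A*} = [[И₂,−Ω₂],[−И₁,Ω₁]], J = [[0,Id_g],[−Id_g,0]], satisfying Π_A·[[−И₁ᵗ,−И₂ᵗ],[Ω₁ᵗ,Ω₂ᵗ]] = −2iπJ), one has Π_{A*} = −J·Π_A·J, and moreover det(Π_A) = det(Π_{A*}) and det(Π_A)·det(Π_{A*}) = (2iπ)^{2g}; consequently det(Π_A) = ±(2iπ)^g. -/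
open Matrix

/-- with `Π_A = [[Ω₁,И₁],[Ω₂,И₂]]`, `Π_{A*} = [[И₂,−Ω₂],[−И₁,Ω₁]]`,
`J = [[0,1],[−1,0]]` and the bilinear relation
`Π_A · [[−И₁ᵗ,−И₂ᵗ],[Ω₁ᵗ,Ω₂ᵗ]] = −2iπ J`, one has `Π_{A*} = −J Π_A J`,
`det Π_A = det Π_{A*}`, `det Π_A · det Π_{A*} = (2iπ)^{2g}` and `det Π_A = ±(2iπ)^g`. -/
theorem abelian_period_determinant (g : ℕ) (Ω₁ Ω₂ E₁ E₂ : Matrix (Fin g) (Fin g) ℂ)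
    (hbil : (fromBlocks Ω₁ E₁ Ω₂ E₂) * (fromBlocks (-E₁ᵀ) (-E₂ᵀ) Ω₁ᵀ Ω₂ᵀ)
      = (-(2 * (Real.pi : ℂ) * Complex.I)) •
        (fromBlocks 0 1 (-1) 0 : Matrix (Fin g ⊕ Fin g) (Fin g ⊕ Fin g) ℂ)) :
    (fromBlocks E₂ (-Ω₂) (-E₁) Ω₁)
      = -((fromBlocks 0 1 (-1) 0 : Matrix (Fin g ⊕ Fin g) (Fin g ⊕ Fin g) ℂ)
          * (fromBlocks Ω₁ E₁ Ω₂ E₂) * (fromBlocks 0 1 (-1) 0)) ∧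
    (fromBlocks Ω₁ E₁ Ω₂ E₂).det = (fromBlocks E₂ (-Ω₂) (-E₁) Ω₁).det ∧
    (fromBlocks Ω₁ E₁ Ω₂ E₂).det * (fromBlocks E₂ (-Ω₂) (-E₁) Ω₁).det
      = (2 * (Real.pi : ℂ) * Complex.I) ^ (2 * g) ∧
    ((fromBlocks Ω₁ E₁ Ω₂ E₂).det = (2 * (Real.pi : ℂ) * Complex.I) ^ g ∨
      (fromBlocks Ω₁ E₁ Ω₂ E₂).det = -(2 * (Real.pi : ℂ) * Complex.I) ^ g) := by
  set c : ℂ := 2 * (Real.pi : ℂ) * Complex.I with hc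
  set J : Matrix (Fin g ⊕ Fin g) (Fin g ⊕ Fin g) ℂ := fromBlocks 0 1 (-1) 0 with hJ
  set P : Matrix (Fin g ⊕ Fin g) (Fin g ⊕ Fin g) ℂ := fromBlocks Ω₁ E₁ Ω₂ E₂ with hP
  have hcard : Fintype.card (Fin g ⊕ Fin g) = 2 * g := by
    simp [Fintype.card_sum, two_mul]
  -- claim 1
  have hJP : J * P = fromBlocks Ω₂ E₂ (-Ω₁) (-E₁) := by
    rw [hJ, hP, fromBlocks_multiply]; simp
  have hJPJ : J * P * J = fromBlocks (-E₂) Ω₂ E₁ (-Ω₁) := by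
    rw [hJP, hJ, fromBlocks_multiply]; simp
  have h1 : (fromBlocks E₂ (-Ω₂) (-E₁) Ω₁) = -(J * P * J) := by
    rw [hJPJ, Matrix.fromBlocks_neg]; simp
  -- Q = -(J * Pᵀ)
  have hQ : (fromBlocks (-E₁ᵀ) (-E₂ᵀ) Ω₁ᵀ Ω₂ᵀ) = -(J * Pᵀ) := by
    rw [hJ, hP, fromBlocks_transpose, fromBlocks_multiply, Matrix.fromBlocks_neg]
    simp
  have hJJ : J * J = -1 := by
    rw [hJ, fromBlocks_multiply, ← fromBlocks_one, Matrix.fromBlocks_neg]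
    simp
  have hdetJ2 : J.det * J.det = 1 := by
    have := congrArg Matrix.det hJJ
    rw [det_mul, det_neg, det_one, hcard] at this
    simpa [pow_mul] using this
  have hdetJ : J.det ≠ 0 := by
    intro h; rw [h, mul_zero] at hdetJ2; exact one_ne_zero hdetJ2.symm
  -- det of the * matrix equals det P
  have h2 : P.det = (fromBlocks E₂ (-Ω₂) (-E₁) Ω₁).det := by
    rw [h1, det_neg, det_mul, det_mul, hcard]
    simp only [pow_mul, neg_one_sq, one_pow, one_mul]
    linear_combination (-P.det) * hdetJ2
  -- from the bilinear relation
  have hb2 : P * (-(J * Pᵀ)) = (-c) • J := by rw [← hQ]; exact hbil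
  have hdet : P.det * (-(J * Pᵀ)).det = (-c) ^ (2 * g) * J.det := by
    have := congrArg Matrix.det hb2
    rwa [det_mul, det_smul, hcard] at this
  have hQdet : (-(J * Pᵀ)).det = J.det * P.det := by
    rw [det_neg, det_mul, det_transpose, hcard]
    simp [pow_mul]
  have key : P.det * P.det = c ^ (2 * g) := by
    have h := hdet
    rw [hQdet, neg_pow, pow_mul, neg_one_sq, one_pow, one_mul] at h
    have h' : (P.det * P.det) * J.det = c ^ (2 * g) * J.det := by
      rw [← h]; ring
    exact mul_right_cancel₀ hdetJ h'
  refine ⟨h1, h2, ?_, ?_⟩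
  · rw [← h2]; exact key
  · have hsq : P.det * P.det = (c ^ g) * (c ^ g) := by
      rw [key, two_mul, pow_add]
    have hz : (P.det - c ^ g) * (P.det + c ^ g) = 0 := by linear_combination hsq
    rcases mul_eq_zero.mp hz with h | h
    · exact Or.inl (sub_eq_zero.mp h)
    · exact Or.inr (eq_neg_of_add_eq_zero_left h)
end

section
/- Let Π_A ∈ GL_{2g}(ℂ) and Π_{A*} := (2iπ·Π_A^{-1})ᵗ. Let L_P ∈ Mat_{n,2g}(ℂ), L_Q ∈ Mat_{s,2g}(ℂ), and define Υ_Q := −Π_A·L_Qᵗ, Υ_P := −Π_{A*}·L_Pᵗ, and let Ξ_R ∈ Mat_{n,s}(ℂ), Ξ_{R*} ∈ Mat_{s,n}(ℂ) satisfy Ξ_Rᵗ + Ξ_{R*} = −L_Q·L_Pᵗ. Set Π_M = [[Ξ_R, L_P, Id_n],[Υ_Q, Π_A, 0],[2iπ·Id_s, 0, 0]] and Π_{M*} = [[0, 0, 2iπ·Id_n],[0, Π_{A*}, Υ_P],[Id_s, L_Q, Ξ_{R*}]]. Then Π_{M*} = (2iπ·Π_M^{-1})ᵗ. In particular det(Π_M)·det(Π_{M*})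 = (2iπ)^{n+2g+s}. -/
/-! Multiplying out the 2 × 2 block decompositions, every block of `Π_M Π_{M*}ᵀ` vanishes or
equals `2iπ Id` by exactly one hypothesis: the abelian duality `Π_A Π_{A*}ᵀ = 2iπ Id`, the
formulas for `Υ_Q` and `Υ_P`, and the relation `Ξ_Rᵗ + Ξ_{R*} = −L_Q L_Pᵗ`. A one-sided inverse
of a square matrix is two-sided, which gives the product in the other order, and the determinant
identity follows by taking determinants. -/

open Matrix

namespace Matrix

variable {R : Type*} [CommRing R] {m n : Type*} [Fintype m] [Fintype n] [DecidableEq m]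

theorem fromCols_add {α m n₁ n₂ : Type*} [Add α] (A₁ B₁ : Matrix m n₁ α)
    (A₂ B₂ : Matrix m n₂ α) :
    fromCols A₁ A₂ + fromCols B₁ B₂ = fromCols (A₁ + B₁) (A₂ + B₂) := by
  ext i (j | j) <;> rfl

theorem mul_eq_smul_one_comm_of_card_eq [DecidableEq n] {c : R} (hc : IsUnit c)
    {A : Matrix m n R} {B : Matrix n m R} (hmn : Fintype.card m = Fintype.card n)
    (h : A * B = c • 1) :
    B * A = c • 1 := by
  obtain ⟨u, rfl⟩ := hc
  have hAB : A * ((↑u⁻¹ : R) • B) = 1 := by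
    rw [Matrix.mul_smul, h, smul_smul, Units.inv_mul, one_smul]
  calc B * A = (u : R) • (((↑u⁻¹ : R) • B) * A) := by
        rw [Matrix.smul_mul, smul_smul, Units.mul_inv, one_smul]
    _ = (u : R) • 1 := by rw [(mul_eq_one_comm_of_card_eq m n R hmn).mp hAB]

theorem det_submatrix_mul_det_submatrix_of_mul_transpose_eq_smul_one (e : m ≃ n) {c : R}
    {A B : Matrix m n R} (h : A * Bᵀ = c • 1) :
    (A.submatrix id e).det * (B.submatrix id e).det = c ^ Fintype.card m := by
  rw [← det_transpose (B.submatrix id e), transpose_submatrix, ← det_mul, submatrix_mul_equiv,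
    h, submatrix_id_id, det_smul, det_one, mul_one]

end Matrix

section PeriodMatrices

variable {R : Type*} [CommRing R] {n a s : Type*} [Fintype n] [Fintype a] [Fintype s]
  [DecidableEq n] [DecidableEq a] [DecidableEq s]

/-- `Π_M`, with `c` in place of `2iπ`; `dualPeriodMatrix` is `Π_{M*}`. -/
def periodMatrix (c : R) (XiR : Matrix n s R) (LP : Matrix n a R) (UQ : Matrix a s R)
    (PA : Matrix a a R) : Matrix (n ⊕ (a ⊕ s)) (s ⊕ (a ⊕ n)) R :=
  fromBlocks XiR (fromCols LP 1) (fromRows UQ (c • 1)) (fromBlocks PA 0 0 0)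

def dualPeriodMatrix (c : R) (PAs : Matrix a a R) (UP : Matrix a n R) (LQ : Matrix s a R)
    (XiRs : Matrix s n R) : Matrix (n ⊕ (a ⊕ s)) (s ⊕ (a ⊕ n)) R :=
  fromBlocks 0 (fromCols 0 (c • 1)) (fromRows 0 1) (fromBlocks PAs UP LQ XiRs)

variable {c : R} {XiR : Matrix n s R} {LP : Matrix n a R} {UQ : Matrix a s R}
  {PA PAs : Matrix a a R} {UP : Matrix a n R} {LQ : Matrix s a R} {XiRs : Matrix s n R}

theorem periodMatrix_mul_dualPeriodMatrix_transpose (hA : PA * PAsᵀ = c • 1)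
    (hUQ : UQ = -(PA * LQᵀ)) (hUP : UP = -(PAs * LPᵀ)) (hXi : XiRᵀ + XiRs = -(LQ * LPᵀ)) :
    periodMatrix c XiR LP UQ PA * (dualPeriodMatrix c PAs UP LQ XiRs)ᵀ = c • 1 := by
  have hUP' : LP * PAsᵀ + UPᵀ = 0 := by
    rw [hUP, transpose_neg, transpose_mul, transpose_transpose, add_neg_cancel]
  have hXi' : XiR + (LP * LQᵀ + XiRsᵀ) = 0 := by
    have hXiT := congrArg transpose hXi
    rw [transpose_add, transpose_transpose, transpose_neg, transpose_mul,
      transpose_transpose] at hXiT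
    rw [add_left_comm, hXiT, add_neg_cancel]
  have hBR : fromCols (0 : Matrix (a ⊕ s) a R) (fromRows UQ (c • 1)) +
      fromBlocks (c • 1) (PA * LQᵀ) 0 0 = c • 1 := by
    rw [hUQ, ← fromBlocks_one, fromBlocks_smul, smul_zero]
    ext (i | i) (j | j) <;> simp
  simp only [periodMatrix, dualPeriodMatrix, fromBlocks_transpose, transpose_fromCols,
    transpose_fromRows, transpose_smul, transpose_zero, transpose_one, fromBlocks_multiply,
    fromCols_mul_fromRows, fromCols_mul_fromBlocks, fromBlocks_mul_fromRows, mul_fromCols,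
    Matrix.mul_zero, Matrix.zero_mul, Matrix.mul_one, Matrix.one_mul, add_zero, zero_add,
    Matrix.mul_smul, hA]
  rw [fromCols_add, zero_add, hUP', hXi', fromCols_zero, hBR]
  simp only [← fromBlocks_one, fromBlocks_smul, smul_zero, fromRows_zero]

theorem dualPeriodMatrix_transpose_mul_periodMatrix (hc : IsUnit c) (hA : PA * PAsᵀ = c • 1)
    (hUQ : UQ = -(PA * LQᵀ)) (hUP : UP = -(PAs * LPᵀ)) (hXi : XiRᵀ + XiRs = -(LQ * LPᵀ)) :
    (dualPeriodMatrix c PAs UP LQ XiRs)ᵀ * periodMatrix c XiR LP UQ PA = c • 1 :=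
  mul_eq_smul_one_comm_of_card_eq hc (by simp only [Fintype.card_sum]; omega)
    (periodMatrix_mul_dualPeriodMatrix_transpose hA hUQ hUP hXi)

end PeriodMatrices

/-- with `Π_{A*} = (2iπΠ_A⁻¹)ᵗ`, `Υ_Q = −Π_A L_Qᵗ`, `Υ_P = −Π_{A*} L_Pᵗ`,
`Ξ_Rᵗ + Ξ_{R*} = −L_Q L_Pᵗ`, the period matrices
`Π_M = [[Ξ_R,L_P,Id_n],[Υ_Q,Π_A,0],[2iπId_s,0,0]]` and
`Π_{M*} = [[0,0,2iπId_n],[0,Π_{A*},Υ_P],[Id_s,L_Q,Ξ_{R*}]]` satisfy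
`Π_{M*} = (2iπΠ_M⁻¹)ᵗ`; in particular `det Π_M · det Π_{M*} = (2iπ)^{n+2g+s}`. -/
theorem period_matrix_cartier_duality (n g s : ℕ)
    (PA : Matrix (Fin (2 * g)) (Fin (2 * g)) ℂ) (hPA : IsUnit PA.det)
    (PAs : Matrix (Fin (2 * g)) (Fin (2 * g)) ℂ)
    (hPAs : PAs = ((2 * (Real.pi : ℂ) * Complex.I) • PA⁻¹)ᵀ)
    (LP : Matrix (Fin n) (Fin (2 * g)) ℂ) (LQ : Matrix (Fin s) (Fin (2 * g)) ℂ)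
    (UQ : Matrix (Fin (2 * g)) (Fin s) ℂ) (hUQ : UQ = -(PA * LQᵀ))
    (UP : Matrix (Fin (2 * g)) (Fin n) ℂ) (hUP : UP = -(PAs * LPᵀ))
    (XiR : Matrix (Fin n) (Fin s) ℂ) (XiRs : Matrix (Fin s) (Fin n) ℂ)
    (hXi : XiRᵀ + XiRs = -(LQ * LPᵀ)) :
    (fromBlocks XiR (fromCols LP (1 : Matrix (Fin n) (Fin n) ℂ))
        (fromRows UQ ((2 * (Real.pi : ℂ) * Complex.I) • (1 : Matrix (Fin s) (Fin s) ℂ)))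
        (fromBlocks PA 0 0 0)) *
      (fromBlocks (0 : Matrix (Fin n) (Fin s) ℂ)
        (fromCols (0 : Matrix (Fin n) (Fin (2 * g)) ℂ)
          ((2 * (Real.pi : ℂ) * Complex.I) • (1 : Matrix (Fin n) (Fin n) ℂ)))
        (fromRows (0 : Matrix (Fin (2 * g)) (Fin s) ℂ) (1 : Matrix (Fin s) (Fin s) ℂ))
        (fromBlocks PAs UP LQ XiRs))ᵀ
      = (2 * (Real.pi : ℂ) * Complex.I) •
        (1 : Matrix (Fin n ⊕ (Fin (2 * g) ⊕ Fin s)) (Fin n ⊕ (Fin (2 * g) ⊕ Fin s)) ℂ) ∧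
    (fromBlocks (0 : Matrix (Fin n) (Fin s) ℂ)
        (fromCols (0 : Matrix (Fin n) (Fin (2 * g)) ℂ)
          ((2 * (Real.pi : ℂ) * Complex.I) • (1 : Matrix (Fin n) (Fin n) ℂ)))
        (fromRows (0 : Matrix (Fin (2 * g)) (Fin s) ℂ) (1 : Matrix (Fin s) (Fin s) ℂ))
        (fromBlocks PAs UP LQ XiRs))ᵀ *
      (fromBlocks XiR (fromCols LP (1 : Matrix (Fin n) (Fin n) ℂ))
        (fromRows UQ ((2 * (Real.pi : ℂ) * Complex.I) • (1 : Matrix (Fin s) (Fin s) ℂ)))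
        (fromBlocks PA 0 0 0))
      = (2 * (Real.pi : ℂ) * Complex.I) •
        (1 : Matrix (Fin s ⊕ (Fin (2 * g) ⊕ Fin n)) (Fin s ⊕ (Fin (2 * g) ⊕ Fin n)) ℂ) ∧
    ∀ e : (Fin n ⊕ (Fin (2 * g) ⊕ Fin s)) ≃ (Fin s ⊕ (Fin (2 * g) ⊕ Fin n)),
      ((fromBlocks XiR (fromCols LP (1 : Matrix (Fin n) (Fin n) ℂ))
        (fromRows UQ ((2 * (Real.pi : ℂ) * Complex.I) • (1 : Matrix (Fin s) (Fin s) ℂ)))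
        (fromBlocks PA 0 0 0)).submatrix id e).det *
      ((fromBlocks (0 : Matrix (Fin n) (Fin s) ℂ)
        (fromCols (0 : Matrix (Fin n) (Fin (2 * g)) ℂ)
          ((2 * (Real.pi : ℂ) * Complex.I) • (1 : Matrix (Fin n) (Fin n) ℂ)))
        (fromRows (0 : Matrix (Fin (2 * g)) (Fin s) ℂ) (1 : Matrix (Fin s) (Fin s) ℂ))
        (fromBlocks PAs UP LQ XiRs)).submatrix id e).det
      = (2 * (Real.pi : ℂ) * Complex.I) ^ (n + 2 * g + s) := by
  set c : ℂ := 2 * (Real.pi : ℂ) * Complex.I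
  have hc : IsUnit c := Complex.two_pi_I_ne_zero.isUnit
  have hA : PA * PAsᵀ = c • 1 := by
    rw [hPAs, transpose_transpose, Matrix.mul_smul, mul_nonsing_inv _ hPA]
  have hM := periodMatrix_mul_dualPeriodMatrix_transpose hA hUQ hUP hXi
  refine ⟨hM, dualPeriodMatrix_transpose_mul_periodMatrix hc hA hUQ hUP hXi, fun e => ?_⟩
  refine (det_submatrix_mul_det_submatrix_of_mul_transpose_eq_smul_one e hM).trans ?_
  simp only [Fintype.card_sum, Fintype.card_fin, add_assoc]
end

section
/- Consider the group G of 4×4 rational matrices ρ(a,u,u*,σ) = [[1, u₁, u₂, σ],[0, a₁₁, a₁₂, u*₁],[0, a₂₁, a₂₂, u*₂],[0, 0, 0, det(a)]] with a = [[a₁₁,a₁₂],[a₂₁,a₂₂]] ∈ GL₂(ℚ), u ∈ ℚ^{1×2}, u* ∈ ℚ^{2×1}, σ ∈ ℚ. Fix α ∈ ℚ^{1×2}, β ∈ ℚ^{2×1}, γ ∈ ℚ, and consider the subset S of G defined by the constraints u = α(a − Id₂), u* = (a − det(a)Id₂)β, σ = (det(a) − 1)γ + α(a − Id₂)β. Then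 S is a subgroup of G. -/
open Matrix

/-- The 4×4 matrix `ρ(a,u,u*,σ) = [[1,u₁,u₂,σ],[0,a₁₁,a₁₂,u*₁],[0,a₂₁,a₂₂,u*₂],
[0,0,0,det a]]`. -/
def rho4 (a : Matrix (Fin 2) (Fin 2) ℚ) (u : Matrix (Fin 1) (Fin 2) ℚ)
    (us : Matrix (Fin 2) (Fin 1) ℚ) (σ : ℚ) : Matrix (Fin 4) (Fin 4) ℚ :=
  !![1, u 0 0, u 0 1, σ;
     0, a 0 0, a 0 1, us 0 0;
     0, a 1 0, a 1 1, us 1 0;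
     0, 0, 0, a.det]

/-- Constrained form of `rho4`. -/
def rhoC (α : Matrix (Fin 1) (Fin 2) ℚ) (β : Matrix (Fin 2) (Fin 1) ℚ) (γ : ℚ)
    (a : Matrix (Fin 2) (Fin 2) ℚ) : Matrix (Fin 4) (Fin 4) ℚ :=
  rho4 a (α * (a - 1)) ((a - a.det • 1) * β)
    ((a.det - 1) * γ + ((α * (a - 1) * β : Matrix (Fin 1) (Fin 1) ℚ) 0 0))

lemma rho4_mul (a b : Matrix (Fin 2) (Fin 2) ℚ) (u v : Matrix (Fin 1) (Fin 2) ℚ)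
    (us vs : Matrix (Fin 2) (Fin 1) ℚ) (σ τ : ℚ) :
    rho4 a u us σ * rho4 b v vs τ =
      rho4 (a * b) (v + u * b) (a * vs + b.det • us)
        (τ + ((u * vs : Matrix (Fin 1) (Fin 1) ℚ) 0 0) + σ * b.det) := by
  ext i j
  fin_cases i <;> fin_cases j <;>
    simp [rho4, Matrix.mul_apply, Fin.sum_univ_succ, Matrix.det_fin_two,
      Matrix.vecHead, Matrix.vecTail] <;> ring

lemma rhoC_one (α : Matrix (Fin 1) (Fin 2) ℚ) (β : Matrix (Fin 2) (Fin 1) ℚ) (γ : ℚ) :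
    rhoC α β γ 1 = 1 := by
  ext i j
  fin_cases i <;> fin_cases j <;>
    simp [rhoC, rho4, Matrix.mul_apply, Fin.sum_univ_succ, Matrix.det_fin_two,
      Matrix.one_apply, Matrix.vecHead, Matrix.vecTail] <;> ring

lemma rhoC_mul (α : Matrix (Fin 1) (Fin 2) ℚ) (β : Matrix (Fin 2) (Fin 1) ℚ) (γ : ℚ)
    (a b : Matrix (Fin 2) (Fin 2) ℚ) :
    rhoC α β γ a * rhoC α β γ b = rhoC α β γ (a * b) := by
  unfold rhoC
  rw [rho4_mul]
  have h1 : α * (b - 1) + α * (a - 1) * b = α * (a * b - 1) := by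
    ext i j
    fin_cases i <;> fin_cases j <;>
      simp [Matrix.mul_apply, Fin.sum_univ_succ, Matrix.one_apply,
        Matrix.vecHead, Matrix.vecTail] <;> ring
  have h2 : a * ((b - b.det • 1) * β) + b.det • ((a - a.det • 1) * β)
      = (a * b - (a * b).det • 1) * β := by
    ext i j
    fin_cases i <;> fin_cases j <;>
      simp [Matrix.mul_apply, Fin.sum_univ_succ, Matrix.one_apply, Matrix.det_fin_two,
        Matrix.vecHead, Matrix.vecTail] <;> ring
  have h3 : ((b.det - 1) * γ + ((α * (b - 1) * β : Matrix (Fin 1) (Fin 1) ℚ) 0 0)) +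
      ((α * (a - 1) * ((b - b.det • 1) * β) : Matrix (Fin 1) (Fin 1) ℚ) 0 0) +
      ((a.det - 1) * γ + ((α * (a - 1) * β : Matrix (Fin 1) (Fin 1) ℚ) 0 0)) * b.det
      = ((a * b).det - 1) * γ +
        ((α * (a * b - 1) * β : Matrix (Fin 1) (Fin 1) ℚ) 0 0) := by
    simp [Matrix.mul_apply, Fin.sum_univ_succ, Matrix.one_apply, Matrix.det_fin_two,
      Matrix.vecHead, Matrix.vecTail]
    ring
  rw [h1, h2, h3]

/-- the subset `S` of matrices `ρ(a,u,u*,σ)` with `a ∈ GL₂(ℚ)` cut out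
by the constraints `u = α(a−1)`, `u* = (a−det(a)·1)β`, `σ = (det(a)−1)γ + α(a−1)β`
is a subgroup (contains `1`, closed under products and inverses). -/
theorem mumford_tate_torsion_case_subgroup
    (α : Matrix (Fin 1) (Fin 2) ℚ) (β : Matrix (Fin 2) (Fin 1) ℚ) (γ : ℚ) :
    let S : Set (Matrix (Fin 4) (Fin 4) ℚ) :=
      {M | ∃ a : Matrix (Fin 2) (Fin 2) ℚ, IsUnit a ∧
        M = rho4 a (α * (a - 1)) ((a - a.det • 1) * β)
          ((a.det - 1) * γ + ((α * (a - 1) * β : Matrix (Fin 1) (Fin 1) ℚ) 0 0))}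
    (1 : Matrix (Fin 4) (Fin 4) ℚ) ∈ S ∧
    (∀ M ∈ S, ∀ N ∈ S, M * N ∈ S) ∧
    (∀ M ∈ S, ∃ N ∈ S, M * N = 1 ∧ N * M = 1) := by
  intro S
  have hS : ∀ M, M ∈ S ↔ ∃ a, IsUnit a ∧ M = rhoC α β γ a := by
    intro M; rfl
  refine ⟨?_, ?_, ?_⟩
  · exact (hS 1).2 ⟨1, isUnit_one, (rhoC_one α β γ).symm⟩
  · rintro M hM N hN
    obtain ⟨a, ha, rfl⟩ := (hS M).1 hM
    obtain ⟨b, hb, rfl⟩ := (hS N).1 hN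
    exact (hS _).2 ⟨a * b, ha.mul hb, rhoC_mul α β γ a b⟩
  · rintro M hM
    obtain ⟨a, ha, rfl⟩ := (hS M).1 hM
    have hd : IsUnit a.det := (Matrix.isUnit_iff_isUnit_det a).mp ha
    have hinv : a * a⁻¹ = 1 := Matrix.mul_nonsing_inv a hd
    have hinv' : a⁻¹ * a = 1 := Matrix.nonsing_inv_mul a hd
    refine ⟨rhoC α β γ a⁻¹,
      (hS _).2 ⟨a⁻¹, ⟨⟨a⁻¹, a, hinv', hinv⟩, rfl⟩, rfl⟩, ?_, ?_⟩
    · rw [rhoC_mul, hinv, rhoC_one]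
    · rw [rhoC_mul, hinv', rhoC_one]
end
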